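/- Let x1 < x2, let k_i, kbar_i : [x1,x2] → ℝ (i = 1,…,n) be continuous and nonnegative, let a : [x1,x2] → ℝ be continuous and strictly positive, and let the inheritance kernel be k(x,y) = Σ_{i=1}^{n} k_i(x) kbar_i(y). Assume κ_{i,j} := ∫_{x1}^{x2} kbar_i(x) k_j(x)/a(x) dx > 0 for all i, j = 1,…,n and Σ_{i=1}^{n} k_i(x) > 0 for every x ∈ [x1,x2]. Then for β = 0 the model admits a strictly positive stationary state: there exist F* > 0 and z* ∈ L¹(x1,x2) with z*(x) > 0 for a.e. x such that ∫_{x1}^{x2} k(x,y) z*(y) dy = F* a(x) z*(x) for a.e. x and μ/K = ∫_{x1}^{x2} a(x) z*(x) dx. -/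

import Mathlib

open MeasureTheory Set Finset

/-!
For `z = (∑ j, c j * k j) / a` the stationarity equation `∫ k(x,y) z(y) dy = F a(x) z(x)` reduces
to the eigenvalue problem `κ c = F c` for the matrix `κ i j = ∫ kbar i * k j / a`. As `κ` has
positive entries, Perron's theorem provides `F > 0` and `c > 0`, hence `z > 0`; a positive multiple
of `z` then satisfies `∫ a z = μ / K`.
-/

namespace Matrix

variable {ι : Type*} [Fintype ι] {B : Matrix ι ι ℝ}

theorem mulVec_pos_of_nonneg_of_ne_zero (hB : ∀ i j, 0 < B i j) {x : ι → ℝ} (hx : 0 ≤ x)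
    (hx0 : x ≠ 0) (i : ι) : 0 < (B *ᵥ x) i := by
  obtain ⟨j, hj⟩ := Function.ne_iff.mp hx0
  exact sum_pos' (fun j _ => mul_nonneg (hB i j).le (hx j))
    ⟨j, mem_univ j, mul_pos (hB i j) ((hx j).lt_of_ne' hj)⟩

theorem le_sum_sum_of_smul_le_mulVec (hB : ∀ i j, 0 ≤ B i j) {x : ι → ℝ}
    (hx : x ∈ stdSimplex ℝ ι) {t : ℝ} (ht : t • x ≤ B *ᵥ x) : t ≤ ∑ i, ∑ j, B i j :=
  calc t = ∑ i, t * x i := by rw [← mul_sum, hx.2, mul_one]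
    _ ≤ ∑ i, ∑ j, B i j * x j := sum_le_sum fun i _ => ht i
    _ ≤ ∑ i, ∑ j, B i j := sum_le_sum fun i _ => sum_le_sum fun j _ =>
      mul_le_of_le_one_right (hB i j) (mem_Icc_of_mem_stdSimplex hx j).2

theorem exists_lt_smul_le_mulVec_mulVec [Nonempty ι] (hB : ∀ i j, 0 < B i j) {x : ι → ℝ}
    (hx : 0 ≤ x) (hx0 : x ≠ 0) {r : ℝ} (hr : r • x ≤ B *ᵥ x) (hne : B *ᵥ x ≠ r • x) :
    ∃ t > r, t • (B *ᵥ x) ≤ B *ᵥ (B *ᵥ x) := by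
  set w := B *ᵥ x
  have hw : ∀ i, 0 < w i := mulVec_pos_of_nonneg_of_ne_zero hB hx hx0
  have hrw : ∀ i, r * w i < (B *ᵥ w) i := by
    intro i
    have := mulVec_pos_of_nonneg_of_ne_zero hB (sub_nonneg.mpr hr) (sub_ne_zero.mpr hne) i
    simpa [mulVec_sub, mulVec_smul, w] using this
  refine ⟨univ.inf' univ_nonempty fun i => (B *ᵥ w) i / w i, ?_, fun i => ?_⟩
  · exact (lt_inf'_iff _).mpr fun i _ => (lt_div_iff₀ (hw i)).mpr (hrw i)
  · exact (le_div_iff₀ (hw i)).mp (inf'_le _ (mem_univ i))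

/-- The eigenvalue is the largest `t` with `t • x ≤ B *ᵥ x` for some `x` in the standard simplex
(Collatz–Wielandt); at a maximiser, `exists_lt_smul_le_mulVec_mulVec` rules out a strict
inequality. -/
theorem exists_pos_eigenvector_of_pos [Nonempty ι] (hB : ∀ i j, 0 < B i j) :
    ∃ r : ℝ, 0 < r ∧ ∃ c : ι → ℝ, (∀ i, 0 < c i) ∧ B *ᵥ c = r • c := by
  classical
  set S : Set (ℝ × (ι → ℝ)) :=
    (Icc 0 (∑ i, ∑ j, B i j) ×ˢ stdSimplex ℝ ι) ∩ {p | p.1 • p.2 ≤ B *ᵥ p.2}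
  have hS : IsCompact S :=
    (isCompact_Icc.prod (isCompact_stdSimplex ℝ ι)).inter_right
      (isClosed_le (by fun_prop) (continuous_const.matrix_mulVec continuous_snd))
  obtain ⟨i₀⟩ := ‹Nonempty ι›
  have hS₀ : (0, Pi.single i₀ 1) ∈ S :=
    ⟨⟨⟨le_rfl, sum_nonneg fun i _ => sum_nonneg fun j _ => (hB i j).le⟩,
      single_mem_stdSimplex ℝ i₀⟩, fun i => by simpa using (hB i i₀).le⟩
  obtain ⟨⟨r, x⟩, ⟨⟨⟨hr0, -⟩, hx⟩, hrx⟩, hmax⟩ :=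
    hS.exists_isMaxOn ⟨_, hS₀⟩ continuous_fst.continuousOn
  have hx0 : x ≠ 0 := by rintro rfl; simpa using hx.2
  have heig : B *ᵥ x = r • x := by
    by_contra hne
    obtain ⟨t, hrt, ht⟩ := exists_lt_smul_le_mulVec_mulVec hB hx.1 hx0 hrx hne
    have hBx : ∀ i, 0 < (B *ᵥ x) i := mulVec_pos_of_nonneg_of_ne_zero hB hx.1 hx0
    have hw : 0 < ∑ i, (B *ᵥ x) i := sum_pos (fun i _ => hBx i) univ_nonempty
    set y := (∑ i, (B *ᵥ x) i)⁻¹ • B *ᵥ x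
    have hy : y ∈ stdSimplex ℝ ι :=
      ⟨fun i => smul_nonneg (inv_nonneg.mpr hw.le) (hBx i).le,
        by simp only [y, Pi.smul_apply, smul_eq_mul, ← mul_sum, inv_mul_cancel₀ hw.ne']⟩
    have hty : t • y ≤ B *ᵥ y := by
      rw [mulVec_smul, smul_comm]
      exact smul_le_smul_of_nonneg_left ht (inv_nonneg.mpr hw.le)
    have hbound := le_sum_sum_of_smul_le_mulVec (fun i j => (hB i j).le) hy hty
    exact hrt.not_ge (hmax (a := (t, y)) ⟨⟨⟨hr0.trans hrt.le, hbound⟩, hy⟩, hty⟩)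
  have hpos : ∀ i, 0 < r * x i := by
    simpa [heig] using mulVec_pos_of_nonneg_of_ne_zero hB hx.1 hx0
  exact ⟨r, pos_of_mul_pos_left (hpos i₀) (hx.1 i₀), x,
    fun i => pos_of_mul_pos_right (hpos i) hr0, heig⟩

end Matrix

section FiniteRankKernel

open Matrix

variable {α ι : Type*} [Fintype ι] (k kbar : ι → α → ℝ) (a : α → ℝ)

noncomputable def stationaryProfile (c : ι → ℝ) (y : α) : ℝ := (∑ j, c j * k j y) / a y

noncomputable def kappaMatrix [MeasurableSpace α] (ν : Measure α) : Matrix ι ι ℝ :=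
  Matrix.of fun i j => ∫ y, kbar i y * k j y / a y ∂ν

variable {k kbar a}

theorem stationaryProfile_pos {c : ι → ℝ} (hc : ∀ j, 0 < c j) {x : α} (hk : ∀ j, 0 ≤ k j x)
    (hsum : 0 < ∑ j, k j x) (ha : 0 < a x) : 0 < stationaryProfile k a c x := by
  obtain ⟨j, -, hj⟩ := exists_lt_of_sum_lt (f := 0) (g := (k · x)) (by simpa using hsum)
  exact div_pos (sum_pos' (fun j _ => mul_nonneg (hc j).le (hk j))
    ⟨j, mem_univ j, mul_pos (hc j) hj⟩) ha

theorem mul_stationaryProfile_eq_sum (c : ι → ℝ) (i : ι) (y : α) :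
    kbar i y * stationaryProfile k a c y = ∑ j, c j * (kbar i y * k j y / a y) := by
  simp only [stationaryProfile, mul_div_assoc', mul_sum, sum_div]
  exact sum_congr rfl fun j _ => by ring

variable [MeasurableSpace α] {ν : Measure α}

theorem integral_mul_stationaryProfile
    (hint : ∀ i j, Integrable (fun y => kbar i y * k j y / a y) ν) (c : ι → ℝ) (i : ι) :
    ∫ y, kbar i y * stationaryProfile k a c y ∂ν = (kappaMatrix k kbar a ν *ᵥ c) i := by
  simp only [mul_stationaryProfile_eq_sum]
  rw [integral_finsetSum _ fun j _ => (hint i j).const_mul (c j)]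
  simp only [integral_const_mul, Matrix.mulVec, dotProduct, kappaMatrix, Matrix.of_apply, mul_comm]

theorem integral_finiteRankKernel_mul_stationaryProfile
    (hint : ∀ i j, Integrable (fun y => kbar i y * k j y / a y) ν) {c : ι → ℝ} {r : ℝ}
    (hc : kappaMatrix k kbar a ν *ᵥ c = r • c) {x : α} (hx : a x ≠ 0) :
    ∫ y, (∑ i, k i x * kbar i y) * stationaryProfile k a c y ∂ν =
      r * a x * stationaryProfile k a c x := by
  have hrow : ∀ i, Integrable (fun y => kbar i y * stationaryProfile k a c y) ν := fun i => by
    simp only [mul_stationaryProfile_eq_sum]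
    exact integrable_finsetSum _ fun j _ => (hint i j).const_mul (c j)
  calc ∫ y, (∑ i, k i x * kbar i y) * stationaryProfile k a c y ∂ν
      = ∑ i, k i x * ∫ y, kbar i y * stationaryProfile k a c y ∂ν := by
        simp only [sum_mul, mul_assoc]
        rw [integral_finsetSum _ fun i _ => (hrow i).const_mul (k i x)]
        simp only [integral_const_mul]
    _ = ∑ i, k i x * (r * c i) := by
        simp only [integral_mul_stationaryProfile hint, hc, Pi.smul_apply, smul_eq_mul]
    _ = r * a x * stationaryProfile k a c x := by
        rw [stationaryProfile, mul_assoc, mul_div_cancel₀ _ hx, mul_sum]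
        exact sum_congr rfl fun i _ => by ring

end FiniteRankKernel

theorem finite_rank_kernel_positive_stationary_state_beta_zero_general
    (x1 x2 : ℝ) (hx : x1 < x2) (n : ℕ)
    (k kbar : Fin n → ℝ → ℝ)
    (hkC : ∀ i, ContinuousOn (k i) (Icc x1 x2))
    (hkbarC : ∀ i, ContinuousOn (kbar i) (Icc x1 x2))
    (hkN : ∀ i, ∀ x ∈ Icc x1 x2, 0 ≤ k i x)
    (a : ℝ → ℝ) (haC : ContinuousOn a (Icc x1 x2))
    (haP : ∀ x ∈ Icc x1 x2, 0 < a x)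
    (K μ : ℝ) (hK : 0 < K) (hμ : 0 < μ)
    (hκ : ∀ i j, 0 < ∫ x in Icc x1 x2, kbar i x * k j x / a x)
    (hksum : ∀ x ∈ Icc x1 x2, 0 < ∑ i, k i x) :
    ∃ (Fstar : ℝ) (zstar : ℝ → ℝ),
      0 < Fstar ∧
      IntegrableOn zstar (Icc x1 x2) ∧
      (∀ᵐ x ∂(volume.restrict (Icc x1 x2)), 0 < zstar x) ∧
      (∀ᵐ x ∂(volume.restrict (Icc x1 x2)),
        (∫ y in Icc x1 x2, (∑ i, k i x * kbar i y) * zstar y)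
          = Fstar * a x * zstar x) ∧
      μ / K = ∫ x in Icc x1 x2, a x * zstar x := by
  have ha0 : ∀ x ∈ Icc x1 x2, a x ≠ 0 := fun x hxs => (haP x hxs).ne'
  have : Nonempty (Fin n) := by
    obtain ⟨i, -, -⟩ := exists_lt_of_sum_lt (f := 0) (g := (k · x1))
      (by simpa using hksum x1 (left_mem_Icc.mpr hx.le))
    exact ⟨i⟩
  obtain ⟨r, hr, c, hc, hκc⟩ :=
    Matrix.exists_pos_eigenvector_of_pos
      (B := kappaMatrix k kbar a (volume.restrict (Icc x1 x2))) hκ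
  have hint : ∀ i j, IntegrableOn (fun y => kbar i y * k j y / a y) (Icc x1 x2) := fun i j =>
    (((hkbarC i).mul (hkC j)).div haC ha0).integrableOn_compact isCompact_Icc
  set z := stationaryProfile k a c
  have hzC : ContinuousOn z (Icc x1 x2) :=
    (continuousOn_finsetSum _ fun j _ => continuousOn_const.mul (hkC j)).div haC ha0
  have hz : ∀ x ∈ Icc x1 x2, 0 < z x := fun x hxs =>
    stationaryProfile_pos hc (fun j => hkN j x hxs) (hksum x hxs) (haP x hxs)
  have hmass : 0 < ∫ x in Icc x1 x2, a x * z x := by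
    rw [integral_Icc_eq_integral_Ioc, ← intervalIntegral.integral_of_le hx.le]
    exact intervalIntegral.intervalIntegral_pos_of_pos_on
      ((haC.mul hzC).intervalIntegrable_of_Icc hx.le)
      (fun x hxs => mul_pos (haP x (Ioo_subset_Icc_self hxs)) (hz x (Ioo_subset_Icc_self hxs))) hx
  set s := μ / K / ∫ x in Icc x1 x2, a x * z x
  have hs : 0 < s := by positivity
  refine ⟨r, fun x => s * z x, hr, (hzC.integrableOn_compact isCompact_Icc).const_mul s,
    (ae_restrict_iff' measurableSet_Icc).mpr (.of_forall fun x hxs => mul_pos hs (hz x hxs)),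
    (ae_restrict_iff' measurableSet_Icc).mpr (.of_forall fun x hxs => ?_), ?_⟩
  · simp only [mul_left_comm _ s, integral_const_mul]
    rw [integral_finiteRankKernel_mul_stationaryProfile hint hκc (ha0 x hxs)]
  · simp_rw [mul_left_comm _ s, integral_const_mul]
    exact (div_mul_cancel₀ _ hmass.ne').symm

/-- Lemma 2.1: for a finite-rank kernel
`k(x,y) = Σ_i k_i(x) kbar_i(y)` with `κ_{i,j} = ∫ kbar_i k_j / a > 0` and
`Σ_i k_i > 0`, the model with `β = 0` admits a strictly positive stationary
state. -/
theorem finite_rank_kernel_positive_stationary_state_beta_zero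
    (x1 x2 : ℝ) (hx : x1 < x2) (n : ℕ)
    (k kbar : Fin n → ℝ → ℝ)
    (hkC : ∀ i, ContinuousOn (k i) (Icc x1 x2))
    (hkbarC : ∀ i, ContinuousOn (kbar i) (Icc x1 x2))
    (hkN : ∀ i, ∀ x ∈ Icc x1 x2, 0 ≤ k i x)
    (hkbarN : ∀ i, ∀ x ∈ Icc x1 x2, 0 ≤ kbar i x)
    (a : ℝ → ℝ) (haC : ContinuousOn a (Icc x1 x2))
    (haP : ∀ x ∈ Icc x1 x2, 0 < a x)
    (K μ : ℝ) (hK : 0 < K) (hμ : 0 < μ)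
    (hκ : ∀ i j, 0 < ∫ x in Icc x1 x2, kbar i x * k j x / a x)
    (hksum : ∀ x ∈ Icc x1 x2, 0 < ∑ i, k i x) :
    ∃ (Fstar : ℝ) (zstar : ℝ → ℝ),
      0 < Fstar ∧
      IntegrableOn zstar (Icc x1 x2) ∧
      (∀ᵐ x ∂(volume.restrict (Icc x1 x2)), 0 < zstar x) ∧
      (∀ᵐ x ∂(volume.restrict (Icc x1 x2)),
        (∫ y in Icc x1 x2, (∑ i, k i x * kbar i y) * zstar y)
          = Fstar * a x * zstar x) ∧
      μ / K = ∫ x in Icc x1 x2, a x * zstar x :=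
  finite_rank_kernel_positive_stationary_state_beta_zero_general x1 x2 hx n k kbar hkC hkbarC hkN a
    haC haP K μ hK hμ hκ hksum
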